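/- Every algebraic complete OML with the covering property is modular: if L is a complete OML that is algebraic and has the covering property, then for all x, y, z ∈ L with x ≤ z, x ⊔ (y ⊓ z) = (x ⊔ y) ⊓ z. -/

import Mathlib

/-- A complete orthomodular lattice. -/
class CompleteOML (α : Type*) extends CompleteLattice α, Compl α where
  compl_compl : ∀ x : α, xᶜᶜ = x
  compl_antitone : ∀ x y : α, x ≤ y → yᶜ ≤ xᶜ
  inf_compl : ∀ x : α, x ⊓ xᶜ = ⊥
  sup_compl : ∀ x : α, x ⊔ xᶜ = ⊤
  orthomodular : ∀ x y : α, x ≤ y → x ⊔ (xᶜ ⊓ y) = y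

/-- A complete lattice is algebraic if every element is the supremum of the compact
elements below it. -/
def IsAlgebraicLattice (α : Type*) [CompleteLattice α] : Prop :=
  ∀ x : α, x = sSup {c : α | IsCompactElement c ∧ c ≤ x}

/-!
Algebraicity makes every atom compact, and with orthomodularity it makes the lattice atomistic:
a coatom `m` of `[⊥, k]`, `k` compact, yields the atom `mᶜ ⊓ k`. An atom below `(x ⊔ y) ⊓ z`
therefore lies below `a ⊔ b` for finite joins of atoms `a ≤ x` and `b ≤ y`, so it is enough to
prove the modular law inside `[⊥, C]` for a finite join of atoms `C`.

There the covering property gives the exchange property, so the corank of `x` in `C` (the least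
number of atoms joining `x` up to `C`) is strictly antitone and supermodular. The relative
orthocomplement `x ↦ xᶜ ⊓ C` reverses the order of `[⊥, C]` and adds to the corank a constant,
so supermodularity applied to complements gives submodularity. Hence the corank is a strictly
antitone modular valuation on `[⊥, C]`, which forces the modular law.
-/

def IsFiniteJoinOfAtoms {α : Type*} [Lattice α] [OrderBot α] (c : α) : Prop :=
  ∃ S : Finset α, (∀ q ∈ S, IsAtom q) ∧ S.sup id = c

def HasCoveringProperty (α : Type*) [Lattice α] [OrderBot α] : Prop :=
  ∀ p : α, IsAtom p → ∀ x : α, p ≤ x ∨ x ⋖ x ⊔ p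

section Atomistic

variable {α : Type*} [Lattice α] [OrderBot α] [IsAtomistic α] {x y : α}

theorem exists_isAtom_le_not_le (h : ¬ x ≤ y) : ∃ p, IsAtom p ∧ p ≤ x ∧ ¬ p ≤ y := by
  by_contra! hxy
  exact h (le_iff_atom_le_imp.mpr hxy)

end Atomistic

section CompactlyGenerated

variable {α : Type*} [CompleteLattice α] [IsCompactlyGenerated α] {p x y : α}

theorem exists_isCompactElement_le_ne_bot (hx : x ≠ ⊥) :
    ∃ k, IsCompactElement k ∧ k ≤ x ∧ k ≠ ⊥ := by
  by_contra! h
  exact hx (le_bot_iff.mp (le_iff_compact_le_imp.mpr fun k hk hkx => (h k hk hkx).le))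

theorem IsAtom.isCompactElement (hp : IsAtom p) : IsCompactElement p := by
  obtain ⟨k, hk, hkp, hk0⟩ := exists_isCompactElement_le_ne_bot hp.1
  rwa [← (hp.le_iff.mp hkp).resolve_left hk0]

theorem exists_isFiniteJoinOfAtoms_of_le_sup [IsAtomistic α] (hp : IsAtom p) (h : p ≤ x ⊔ y) :
    ∃ a b, a ≤ x ∧ b ≤ y ∧ p ≤ a ⊔ b ∧ IsFiniteJoinOfAtoms (a ⊔ b) := by
  classical
  let s := {q | IsAtom q ∧ (q ≤ x ∨ q ≤ y)}
  have hxy : x ⊔ y ≤ sSup s :=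
    sup_le (le_iff_atom_le_imp.mpr fun q hq hqx => le_sSup ⟨hq, .inl hqx⟩)
      (le_iff_atom_le_imp.mpr fun q hq hqy => le_sSup ⟨hq, .inr hqy⟩)
  obtain ⟨t, hts, hpt⟩ := (CompleteLattice.isCompactElement_iff_exists_le_sSup_of_le_sSup α p).mp
    hp.isCompactElement s (h.trans hxy)
  have hsplit : t.sup id = (t.filter (· ≤ x)).sup id ⊔ (t.filter (¬ · ≤ x)).sup id := by
    rw [← Finset.sup_union, Finset.filter_union_filter_not_eq]
  refine ⟨_, _, Finset.sup_le fun q hq => (Finset.mem_filter.mp hq).2,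
    Finset.sup_le fun q hq => ?_, hsplit ▸ hpt, t, fun q hq => (hts hq).1, hsplit⟩
  obtain ⟨hqt, hqx⟩ := Finset.mem_filter.mp hq
  exact (hts hqt).2.resolve_left hqx

end CompactlyGenerated

namespace CompleteOML

variable {α : Type*} [CompleteOML α] {C x y : α}

theorem compl_le_compl (h : x ≤ y) : yᶜ ≤ xᶜ := compl_antitone x y h

theorem le_compl_comm : x ≤ yᶜ ↔ y ≤ xᶜ :=
  ⟨fun h => by simpa [compl_compl] using compl_le_compl h,
    fun h => by simpa [compl_compl] using compl_le_compl h⟩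

theorem compl_sup : (x ⊔ y)ᶜ = xᶜ ⊓ yᶜ :=
  le_antisymm (le_inf (compl_le_compl le_sup_left) (compl_le_compl le_sup_right))
    (le_compl_comm.mpr (sup_le (le_compl_comm.mpr inf_le_left) (le_compl_comm.mpr inf_le_right)))

theorem compl_inf : (x ⊓ y)ᶜ = xᶜ ⊔ yᶜ := by
  rw [← compl_compl (xᶜ ⊔ yᶜ), compl_sup, compl_compl, compl_compl]

theorem inf_compl_sup_of_le (h : x ≤ y) : y ⊓ (yᶜ ⊔ x) = x := by
  simpa [compl_sup, compl_inf, compl_compl] using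
    congrArg (·ᶜ) (orthomodular yᶜ xᶜ (compl_le_compl h))

theorem isAtom_compl_inf_of_covBy (h : x ⋖ y) : IsAtom (xᶜ ⊓ y) := by
  have hsup : x ⊔ (xᶜ ⊓ y) = y := orthomodular x y h.le
  refine ⟨fun h0 => h.ne (by rwa [h0, sup_bot_eq] at hsup), fun b hb => ?_⟩
  have hbx : b ≤ xᶜ := hb.le.trans inf_le_left
  rcases h.eq_or_eq le_sup_left (sup_le h.le (hb.le.trans inf_le_right)) with hxb | hxb
  · exact le_bot_iff.mp (inf_compl x ▸ le_inf (hxb ▸ le_sup_right) hbx)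
  · have : xᶜ ⊓ (xᶜᶜ ⊔ b) = b := inf_compl_sup_of_le hbx
    rw [compl_compl, hxb] at this
    exact absurd this.symm hb.ne

theorem isAtomic [IsCompactlyGenerated α] : IsAtomic α := by
  refine ⟨fun x => or_iff_not_imp_left.mpr fun hx => ?_⟩
  obtain ⟨k, hk, hkx, hk0⟩ := exists_isCompactElement_le_ne_bot hx
  obtain hbot | ⟨m, hm, -⟩ :=
    (CompleteLattice.Iic_coatomic_of_compact_element hk).eq_top_or_exists_le_coatom ⊥
  · exact absurd (congrArg Subtype.val hbot).symm hk0
  exact ⟨_, isAtom_compl_inf_of_covBy (Set.Iic.isCoatom_iff.mp hm), inf_le_right.trans hkx⟩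

theorem isAtomistic [IsAtomic α] : IsAtomistic α := by
  refine CompleteLattice.isAtomistic_iff.mpr fun x => ⟨{p | IsAtom p ∧ p ≤ x}, ?_, fun p hp => hp.1⟩
  set A := sSup {p | IsAtom p ∧ p ≤ x}
  have hle : A ≤ x := sSup_le fun p hp => hp.2
  have hrest : Aᶜ ⊓ x = ⊥ := by
    refine (eq_bot_or_exists_atom_le _).resolve_right ?_
    rintro ⟨p, hp, hpx⟩
    exact hp.1 (le_bot_iff.mp (inf_compl A ▸
      le_inf (le_sSup ⟨hp, hpx.trans inf_le_right⟩) (hpx.trans inf_le_left)))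
  calc x = A ⊔ (Aᶜ ⊓ x) := (orthomodular A x hle).symm
    _ = A := by rw [hrest, sup_bot_eq]

def relCompl (C x : α) : α := xᶜ ⊓ C

theorem relCompl_le (C x : α) : relCompl C x ≤ C := inf_le_right

theorem relCompl_anti (h : x ≤ y) : relCompl C y ≤ relCompl C x :=
  inf_le_inf_right C (compl_le_compl h)

theorem relCompl_relCompl (hx : x ≤ C) : relCompl C (relCompl C x) = x := by
  rw [relCompl, relCompl, compl_inf, compl_compl, inf_comm, sup_comm]
  exact inf_compl_sup_of_le hx

theorem relCompl_self (C : α) : relCompl C C = ⊥ := by rw [relCompl, inf_comm, inf_compl]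

theorem relCompl_sup (x y : α) : relCompl C (x ⊔ y) = relCompl C x ⊓ relCompl C y := by
  rw [relCompl, relCompl, relCompl, compl_sup, inf_inf_distrib_right]

theorem relCompl_inf (hx : x ≤ C) (hy : y ≤ C) :
    relCompl C (x ⊓ y) = relCompl C x ⊔ relCompl C y := by
  conv_lhs => rw [← relCompl_relCompl hx, ← relCompl_relCompl hy, ← relCompl_sup]
  exact relCompl_relCompl (sup_le (relCompl_le C x) (relCompl_le C y))

theorem relCompl_lt_relCompl (h : x < y) (hy : y ≤ C) : relCompl C y < relCompl C x := by
  refine (relCompl_anti h.le).lt_of_ne fun heq => h.ne ?_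
  rw [← relCompl_relCompl (h.le.trans hy), ← relCompl_relCompl hy, heq]

theorem relCompl_covBy (h : x ⋖ y) (hy : y ≤ C) : relCompl C y ⋖ relCompl C x := by
  refine ⟨relCompl_lt_relCompl h.lt hy, fun c hyc hcx => ?_⟩
  have hcC : c ≤ C := hcx.le.trans (relCompl_le C x)
  refine h.2 (c := relCompl C c) ?_ ?_
  · simpa [relCompl_relCompl (h.le.trans hy)] using relCompl_lt_relCompl hcx (relCompl_le C x)
  · simpa [relCompl_relCompl hy] using relCompl_lt_relCompl hyc hcC

end CompleteOML

section Corank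

variable {α : Type*} [Lattice α] [OrderBot α] {C p q w x y : α}

theorem HasCoveringProperty.le_sup_of_le_sup_of_not_le (hcov : HasCoveringProperty α)
    (hq : IsAtom q) (hp : p ≤ w ⊔ q) (hpw : ¬ p ≤ w) : q ≤ w ⊔ p := by
  rcases hcov q hq w with hqw | hcovBy
  · exact absurd (hp.trans (sup_le le_rfl hqw)) hpw
  · have hwp : w ⊔ p = w ⊔ q :=
      (hcovBy.eq_or_eq le_sup_left (sup_le le_sup_left hp)).resolve_left
        fun h => hpw (h ▸ le_sup_right)
    exact hwp ▸ le_sup_right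

theorem HasCoveringProperty.exists_mem_le_sup_erase [DecidableEq α]
    (hcov : HasCoveringProperty α) {S : Finset α} (hS : ∀ q ∈ S, IsAtom q)
    (hp : p ≤ x ⊔ S.sup id) (hpx : ¬ p ≤ x) : ∃ q ∈ S, q ≤ x ⊔ p ⊔ (S.erase q).sup id := by
  induction S using Finset.induction_on with
  | empty => exact absurd (by simpa using hp) hpx
  | @insert q T hqT ih =>
    rw [Finset.forall_mem_insert] at hS
    by_cases hpT : p ≤ x ⊔ T.sup id
    · obtain ⟨r, hrT, hr⟩ := ih hS.2 hpT
      refine ⟨r, Finset.mem_insert_of_mem hrT, hr.trans (sup_le_sup_left ?_ _)⟩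
      exact Finset.sup_mono (Finset.erase_subset_erase r (Finset.subset_insert q T))
    · refine ⟨q, Finset.mem_insert_self q T, ?_⟩
      rw [Finset.erase_insert hqT, sup_right_comm]
      refine hcov.le_sup_of_le_sup_of_not_le hS.1 ?_ hpT
      rw [Finset.sup_insert, id] at hp
      exact hp.trans_eq (by ac_rfl)

/-- Junk value `0` when no finite set of atoms joins `x` up to `C`. -/
noncomputable def corank (C x : α) : ℕ :=
  sInf {n | ∃ S : Finset α, (∀ q ∈ S, IsAtom q) ∧ x ⊔ S.sup id = C ∧ S.card = n}

theorem corank_le_card {S : Finset α} (hS : ∀ q ∈ S, IsAtom q) (h : x ⊔ S.sup id = C) :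
    corank C x ≤ S.card :=
  Nat.sInf_le ⟨S, hS, h, rfl⟩

theorem corank_self : corank C C = 0 :=
  Nat.le_zero.mp (corank_le_card (S := ∅) (by simp) (by simp))

theorem IsFiniteJoinOfAtoms.exists_card_eq_corank (hC : IsFiniteJoinOfAtoms C) (hx : x ≤ C) :
    ∃ S : Finset α, (∀ q ∈ S, IsAtom q) ∧ x ⊔ S.sup id = C ∧ S.card = corank C x := by
  obtain ⟨S, hS, hSC⟩ := hC
  exact Nat.sInf_mem
    (s := {n | ∃ S : Finset α, (∀ q ∈ S, IsAtom q) ∧ x ⊔ S.sup id = C ∧ S.card = n})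
    ⟨S.card, S, hS, by rw [hSC, sup_eq_right.mpr hx], rfl⟩

theorem corank_anti (hC : IsFiniteJoinOfAtoms C) (hxy : x ≤ y) (hy : y ≤ C) :
    corank C y ≤ corank C x := by
  obtain ⟨S, hS, hxS, hcard⟩ := hC.exists_card_eq_corank (hxy.trans hy)
  refine hcard ▸ corank_le_card hS (le_antisymm (sup_le hy ?_) ?_)
  · exact hxS ▸ le_sup_right
  · exact hxS ▸ sup_le_sup_right hxy _

theorem corank_le_corank_sup_add_one (hC : IsFiniteJoinOfAtoms C) (hx : x ≤ C) (hp : IsAtom p)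
    (hpC : p ≤ C) : corank C x ≤ corank C (x ⊔ p) + 1 := by
  classical
  obtain ⟨S, hS, hxpS, hcard⟩ := hC.exists_card_eq_corank (sup_le hx hpC)
  calc corank C x ≤ (insert p S).card :=
        corank_le_card (Finset.forall_mem_insert _ _ _ |>.mpr ⟨hp, hS⟩)
          (by rw [Finset.sup_insert, id, ← sup_assoc, hxpS])
    _ ≤ S.card + 1 := Finset.card_insert_le p S
    _ = corank C (x ⊔ p) + 1 := by rw [hcard]

variable [IsAtomistic α]

theorem corank_lt_corank (hcov : HasCoveringProperty α) (hC : IsFiniteJoinOfAtoms C)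
    (hxy : x < y) (hy : y ≤ C) : corank C y < corank C x := by
  classical
  obtain ⟨S, hS, hxS, hcard⟩ := hC.exists_card_eq_corank (hxy.le.trans hy)
  obtain ⟨p, -, hpy, hpx⟩ := exists_isAtom_le_not_le hxy.not_ge
  obtain ⟨q, hqS, hq⟩ := hcov.exists_mem_le_sup_erase hS (hxS ▸ hpy.trans hy) hpx
  have hSy : S.sup id ≤ y ⊔ (S.erase q).sup id := Finset.sup_le fun r hr => by
    by_cases hrq : r = q
    · exact hrq ▸ hq.trans (sup_le_sup_right (sup_le hxy.le hpy) _)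
    · exact (Finset.le_sup (f := id) (Finset.mem_erase.mpr ⟨hrq, hr⟩)).trans le_sup_right
  have hyC : y ⊔ (S.erase q).sup id = C :=
    le_antisymm (sup_le hy ((Finset.sup_mono (Finset.erase_subset q S)).trans (hxS ▸ le_sup_right)))
      (hxS ▸ sup_le (hxy.le.trans le_sup_left) hSy)
  calc corank C y ≤ (S.erase q).card :=
        corank_le_card (fun r hr => hS r (Finset.mem_of_mem_erase hr)) hyC
    _ < S.card := Finset.card_erase_lt_of_mem hqS
    _ = corank C x := hcard

theorem corank_eq_corank_add_one_of_covBy (hcov : HasCoveringProperty α)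
    (hC : IsFiniteJoinOfAtoms C) (h : x ⋖ y) (hy : y ≤ C) : corank C x = corank C y + 1 := by
  obtain ⟨p, hp, hpy, hpx⟩ := exists_isAtom_le_not_le h.lt.not_ge
  have hxp : x ⊔ p = y := (h.eq_or_eq le_sup_left (sup_le h.le hpy)).resolve_left
    fun heq => hpx (heq ▸ le_sup_right)
  have hle := corank_le_corank_sup_add_one hC (h.le.trans hy) hp (hpy.trans hy)
  have hlt := corank_lt_corank hcov hC h.lt hy
  rw [hxp] at hle
  omega

theorem corank_add_corank_le (hcov : HasCoveringProperty α) (hC : IsFiniteJoinOfAtoms C)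
    {u v : α} (hu : u ≤ C) (hv : v ≤ C) :
    corank C u + corank C v ≤ corank C (u ⊓ v) + corank C (u ⊔ v) := by
  by_cases huv : u ≤ v
  · rw [inf_eq_left.mpr huv, sup_eq_right.mpr huv]
  obtain ⟨p, hp, hpu, hpuv⟩ := exists_isAtom_le_not_le fun h => huv (h.trans inf_le_right)
  have hpC : p ≤ C := hpu.trans hu
  have hdecr : corank C (u ⊓ (v ⊔ p)) < corank C (u ⊓ v) :=
    (corank_anti hC (sup_le (inf_le_inf_left u le_sup_left) (le_inf hpu le_sup_right))
      (inf_le_left.trans hu)).trans_lt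
      (corank_lt_corank hcov hC (left_lt_sup.mpr hpuv) (sup_le (inf_le_left.trans hu) hpC))
  have ih := corank_add_corank_le hcov hC hu (sup_le hv hpC)
  rw [← sup_assoc, sup_right_comm, sup_eq_left.mpr hpu] at ih
  have := corank_le_corank_sup_add_one hC hv hp hpC
  omega
termination_by corank C (u ⊓ v)

end Corank

namespace CompleteOML

variable {α : Type*} [CompleteOML α] [IsAtomistic α] {C x y z : α}

theorem corank_add_corank_relCompl (hcov : HasCoveringProperty α) (hC : IsFiniteJoinOfAtoms C)
    {x : α} (hx : x ≤ C) : corank C x + corank C (relCompl C x) = corank C ⊥ := by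
  by_cases hxC : x = C
  · rw [hxC, corank_self, relCompl_self, zero_add]
  obtain ⟨p, hp, hpC, hpx⟩ := exists_isAtom_le_not_le fun h => hxC (le_antisymm hx h)
  have hxp : x ⊔ p ≤ C := sup_le hx hpC
  have hcovBy : x ⋖ x ⊔ p := (hcov p hp x).resolve_left hpx
  have hup := corank_eq_corank_add_one_of_covBy hcov hC hcovBy hxp
  have hdown := corank_eq_corank_add_one_of_covBy hcov hC (relCompl_covBy hcovBy hxp)
    (relCompl_le C x)
  have ih := corank_add_corank_relCompl hcov hC hxp
  omega
termination_by corank C x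

theorem corank_inf_add_corank_sup (hcov : HasCoveringProperty α) (hC : IsFiniteJoinOfAtoms C)
    (hx : x ≤ C) (hy : y ≤ C) :
    corank C (x ⊓ y) + corank C (x ⊔ y) = corank C x + corank C y := by
  have hdual := corank_add_corank_le hcov hC (relCompl_le C x) (relCompl_le C y)
  rw [← relCompl_sup, ← relCompl_inf hx hy] at hdual
  have := corank_add_corank_le hcov hC hx hy
  have := corank_add_corank_relCompl hcov hC hx
  have := corank_add_corank_relCompl hcov hC hy
  have := corank_add_corank_relCompl hcov hC ((inf_le_left (b := y)).trans hx)
  have := corank_add_corank_relCompl hcov hC (sup_le hx hy)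
  omega

theorem eq_of_le_of_inf_eq_of_sup_eq (hcov : HasCoveringProperty α) (hC : IsFiniteJoinOfAtoms C)
    (hxy : x ≤ y) (hy : y ≤ C) (hz : z ≤ C) (hinf : x ⊓ z = y ⊓ z) (hsup : x ⊔ z = y ⊔ z) :
    x = y := by
  by_contra hne
  have hlt := corank_lt_corank hcov hC (hxy.lt_of_ne hne) hy
  have hx := corank_inf_add_corank_sup hcov hC (hxy.trans hy) hz
  have hy := corank_inf_add_corank_sup hcov hC hy hz
  rw [hinf, hsup] at hx
  omega

theorem sup_inf_le_of_isFiniteJoinOfAtoms (hcov : HasCoveringProperty α)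
    (hC : IsFiniteJoinOfAtoms C) (hy : y ≤ C) (hz : z ≤ C) (hxz : x ≤ z) :
    (x ⊔ y) ⊓ z ≤ x ⊔ (y ⊓ z) := by
  have hle : x ⊔ (y ⊓ z) ≤ (x ⊔ y) ⊓ z :=
    le_inf (sup_le_sup_left inf_le_left x) (sup_le hxz inf_le_right)
  refine (eq_of_le_of_inf_eq_of_sup_eq hcov hC hle (inf_le_right.trans hz) hy ?_ ?_).ge
  · have hyz : (x ⊔ y) ⊓ z ⊓ y ≤ y ⊓ z := le_inf inf_le_right (inf_le_left.trans inf_le_right)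
    exact le_antisymm (inf_le_inf_right y hle) (hyz.trans (le_inf le_sup_right inf_le_left))
  · exact le_antisymm (sup_le_sup_right hle y)
      (sup_le (inf_le_left.trans (sup_le (le_sup_left.trans le_sup_left) le_sup_right))
        le_sup_right)

end CompleteOML

/-- every algebraic complete OML with the covering property is modular. -/
theorem algebraic_covering_completeOML_modular {α : Type*} [CompleteOML α]
    (halg : IsAlgebraicLattice α)
    (hcov : ∀ p : α, IsAtom p → ∀ x : α, p ≤ x ∨ x ⋖ x ⊔ p) :
    ∀ x y z : α, x ≤ z → x ⊔ (y ⊓ z) = (x ⊔ y) ⊓ z := by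
  have : IsCompactlyGenerated α := ⟨fun x => ⟨_, fun _ hc => hc.1, (halg x).symm⟩⟩
  have : IsAtomic α := CompleteOML.isAtomic
  have : IsAtomistic α := CompleteOML.isAtomistic
  intro x y z hxz
  refine le_antisymm (le_inf (sup_le_sup_left inf_le_left x) (sup_le hxz inf_le_right))
    (le_iff_atom_le_imp.mpr fun p hp hpxyz => ?_)
  obtain ⟨a, b, hax, hby, hpab, hC⟩ :=
    exists_isFiniteJoinOfAtoms_of_le_sup hp (hpxyz.trans inf_le_left)
  calc p ≤ (a ⊔ b) ⊓ (z ⊓ (a ⊔ b)) := le_inf hpab (le_inf (hpxyz.trans inf_le_right) hpab)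
    _ ≤ a ⊔ (b ⊓ (z ⊓ (a ⊔ b))) :=
      CompleteOML.sup_inf_le_of_isFiniteJoinOfAtoms hcov hC le_sup_right inf_le_right
        (le_inf (hax.trans hxz) le_sup_left)
    _ ≤ x ⊔ (y ⊓ z) := sup_le_sup hax (inf_le_inf hby inf_le_left)
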